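/- arXiv:1508.06715 — 2 statements merged into one kernel-verified Lean document; each statement's English description precedes it below -/
import Mathlib

section
/- Let P be a probability measure on a measurable space Ω, and let A, B, H be measurable sets with P(H ∩ B) > 0 and P(Hᶜ ∩ B) > 0. Then P(A | B) ≤ 1 − P(H | B) · (1 − P(A | H ∩ B)). (This is the paper's upper bound RR ≤ 1 − fdr⁽¹⁾·(1 − α₂), showing that when fdr⁽¹⁾ > 0 the reproducibility rate is bounded away from 1 no matter how large the replication sample is.) -/
open MeasureTheory ProbabilityTheory

/-!
Conditioning on `B` reduces the claim to a (zero or) probability measure `μ := P[|B]`, for which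
`μ[|H] = P[|H ∩ B]`. There `μ H * (1 - μ[A|H]) = μ H - μ (H ∩ A)`, while
`μ A = μ (H ∩ A) + μ (A \ H) ≤ μ (H ∩ A) + μ Hᶜ`; adding the two gives at most `μ H + μ Hᶜ ≤ 1`.
-/

namespace ProbabilityTheory

variable {Ω : Type*} [MeasurableSpace Ω] {μ : Measure Ω} {s : Set Ω}

lemma measure_mul_one_sub_cond [IsFiniteMeasure μ] (hs : MeasurableSet s) (t : Set Ω) :
    μ s * (1 - μ[t|s]) = μ s - μ (s ∩ t) := by
  rw [ENNReal.mul_sub (fun _ _ ↦ measure_ne_top μ s), mul_one, mul_comm,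
    cond_mul_eq_inter hs t μ]

lemma measure_le_one_sub_mul_one_sub_cond [IsZeroOrProbabilityMeasure μ]
    (hs : MeasurableSet s) (t : Set Ω) :
    μ t ≤ 1 - μ s * (1 - μ[t|s]) := by
  refine ENNReal.le_sub_of_add_le_right (by finiteness) ?_
  calc μ t + μ s * (1 - μ[t|s])
      = μ (t \ s) + μ (s ∩ t) + (μ s - μ (s ∩ t)) := by
        rw [measure_mul_one_sub_cond hs, Set.inter_comm, add_comm (μ (t \ s)),
          measure_inter_add_sdiff t hs]
    _ = μ (t \ s) + μ s := by
        rw [add_assoc, add_tsub_cancel_of_le (measure_mono Set.inter_subset_left)]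
    _ ≤ μ sᶜ + μ s := by gcongr; exact Set.sdiff_subset_compl t s
    _ ≤ 1 := by rw [add_comm, measure_add_measure_compl hs]; exact prob_le_one

end ProbabilityTheory

theorem rr_upper_bound_general {Ω : Type*} [MeasurableSpace Ω] (P : Measure Ω)
    [IsProbabilityMeasure P] {A B H : Set Ω}
    (hB : MeasurableSet B) (hH : MeasurableSet H) :
    P[A | B] ≤ 1 - P[H | B] * (1 - P[A | H ∩ B]) := by
  have h := measure_le_one_sub_mul_one_sub_cond (μ := P[|B]) hH A
  rwa [cond_cond_eq_cond_inter hB hH, Set.inter_comm B H] at h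

/-- Upper bound on the reproducibility rate: `RR ≤ 1 − fdr⁽¹⁾ · (1 − α₂)`. -/
theorem rr_upper_bound {Ω : Type*} [MeasurableSpace Ω] (P : Measure Ω)
    [IsProbabilityMeasure P] {A B H : Set Ω}
    (hA : MeasurableSet A) (hB : MeasurableSet B) (hH : MeasurableSet H)
    (hHB : 0 < P (H ∩ B)) (hHcB : 0 < P (Hᶜ ∩ B)) :
    P[A | B] ≤ 1 - P[H | B] * (1 - P[A | H ∩ B]) :=
  rr_upper_bound_general P hB hH
end

section
/- Let σ₀, σ⁽¹⁾, σ⁽²⁾ > 0, let μ̂⁽¹⁾, q ∈ ℝ, let s ∈ {−1, 1}, and set λ = 1/(1 + (σ⁽¹⁾/σ₀)²), z* = λ·μ̂⁽¹⁾/σ⁽²⁾, and σ* = √(1 + λ·(σ⁽¹⁾/σ⁽²⁾)²). Then the measure (gaussianReal (λ·μ̂⁽¹⁾) (λ·(σ⁽¹⁾)²)).bind (fun m => gaussianReal (m/σ⁽²⁾) 1) assigns to the set {x ∈ ℝ : s·x > q} the probability Φ((s·z* − q)/σ*). (This is the paper's closed-form expression for the Bayesian predictive power η⁽²⁾ = Φ((sgn(z⁽¹⁾)·z*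 − z_{α₂})/σ*) of the replication study, with s = sgn(z⁽¹⁾) and q = z_{α₂} the upper-α₂ quantile.) -/
/-!
Given the mean `m`, the replication statistic is `N(m/σ₂, 1)`. Mixing a Gaussian location family
over a Gaussian prior is a convolution of Gaussians, so the predictive law is
`N(λμ̂/σ₂, λσ₁²/σ₂² + 1) = N(z*, σ*²)`. Multiplying by `s = ±1` keeps the variance, and the event
`s·x > q` becomes an upper tail of `N(s·z*, σ*²)`, whose mass is `Φ((s·z* − q)/σ*)`.
-/

open MeasureTheory ProbabilityTheory Set
open scoped NNReal

theorem MeasureTheory.Measure.bind_map {α β γ : Type*} [MeasurableSpace α]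
    [MeasurableSpace β] [MeasurableSpace γ] {μ : Measure α} {f : α → β} {κ : β → Measure γ}
    (hf : Measurable f) (hκ : Measurable κ) : (μ.map f).bind κ = μ.bind (κ ∘ f) := by
  ext s hs
  rw [Measure.bind_apply hs hκ.aemeasurable,
    Measure.bind_apply hs (hκ.comp hf).aemeasurable]
  exact lintegral_map ((Measure.measurable_coe hs).comp hκ) hf

namespace ProbabilityTheory

lemma measurable_gaussianReal_mean (v : ℝ≥0) : Measurable fun m : ℝ ↦ gaussianReal m v :=
  measurable_gaussianReal.comp (measurable_id.prodMk measurable_const)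

lemma bind_gaussianReal_eq_conv (μ : Measure ℝ) (v : ℝ≥0) :
    μ.bind (fun m ↦ gaussianReal m v) = μ ∗ gaussianReal 0 v := by
  ext s hs
  have hadd : MeasurableSet ((fun p : ℝ × ℝ ↦ p.1 + p.2) ⁻¹' s) := measurable_add hs
  rw [Measure.bind_apply hs (measurable_gaussianReal_mean v).aemeasurable, Measure.conv,
    Measure.map_apply measurable_add hs, Measure.prod_apply hadd]
  refine lintegral_congr fun m ↦ ?_
  rw [← zero_add m, ← gaussianReal_map_const_add, Measure.map_apply (measurable_const_add _) hs,
    zero_add]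
  rfl

lemma gaussianReal_bind_gaussianReal (a : ℝ) (v w : ℝ≥0) :
    (gaussianReal a v).bind (fun m ↦ gaussianReal m w) = gaussianReal a (v + w) := by
  rw [bind_gaussianReal_eq_conv, gaussianReal_conv_gaussianReal, add_zero]

lemma gaussianReal_bind_gaussianReal_div (a c : ℝ) (v w : ℝ≥0) :
    (gaussianReal a v).bind (fun m ↦ gaussianReal (m / c) w)
      = gaussianReal (a / c) (v / .mk (c ^ 2) (sq_nonneg c) + w) := by
  rw [← gaussianReal_bind_gaussianReal, ← gaussianReal_map_div_const,
    Measure.bind_map (measurable_div_const c) (measurable_gaussianReal_mean w)]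
  rfl

lemma gaussianReal_preimage_const_mul (μ c : ℝ) (v : ℝ≥0) {A : Set ℝ}
    (hA : MeasurableSet A) :
    gaussianReal μ v ((c * ·) ⁻¹' A)
      = gaussianReal (c * μ) (.mk (c ^ 2) (sq_nonneg c) * v) A := by
  rw [← gaussianReal_map_const_mul, Measure.map_apply (measurable_const_mul c) hA]

lemma gaussianReal_map_standardize (μ : ℝ) {v : ℝ≥0} (hv : v ≠ 0) :
    (gaussianReal μ v).map (fun x ↦ (μ - x) / √v) = gaussianReal 0 1 := by
  have hcomp : (fun x ↦ (μ - x) / √v) = (· / √v) ∘ (μ - ·) := rfl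
  rw [hcomp, ← Measure.map_map (measurable_div_const _) (measurable_const_sub μ),
    gaussianReal_map_const_sub, gaussianReal_map_div_const, sub_self, zero_div]
  congr
  ext
  simp [Real.sq_sqrt, hv]

lemma gaussianReal_Ioi (μ t : ℝ) {v : ℝ≥0} (hv : v ≠ 0) :
    gaussianReal μ v (Ioi t) = ENNReal.ofReal (cdf (gaussianReal 0 1) ((μ - t) / √v)) := by
  have hsqrt : 0 < √(v : ℝ) := Real.sqrt_pos.mpr (NNReal.coe_pos.mpr (pos_iff_ne_zero.mpr hv))
  have hpre : Ioi t = (fun x ↦ (μ - x) / √v) ⁻¹' Iio ((μ - t) / √v) := by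
    ext x
    simp [div_lt_div_iff_of_pos_right hsqrt]
  have hatom : gaussianReal 0 1 {(μ - t) / √v} = 0 :=
    gaussianReal_absolutelyContinuous 0 one_ne_zero (measure_singleton _)
  rw [ofReal_cdf, ← measure_congr (Iio_ae_eq_Iic' hatom), ← gaussianReal_map_standardize μ hv,
    Measure.map_apply (by fun_prop) measurableSet_Iio, hpre]

end ProbabilityTheory

theorem bayesian_predictive_power_general (σ₁ σ₂ : ℝ≥0)
    (muHat q : ℝ)
    (s : ℝ) (hs : s = -1 ∨ s = 1)
    (lam : ℝ≥0)
    (zstar : ℝ) (hzstar : zstar = (lam : ℝ) * muHat / σ₂)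
    (σstar : ℝ) (hσstar : σstar = Real.sqrt (1 + (lam : ℝ) * ((σ₁ : ℝ) / σ₂) ^ 2)) :
    ((gaussianReal ((lam : ℝ) * muHat) (lam * σ₁ ^ 2)).bind
        (fun m => gaussianReal (m / σ₂) 1)) {x : ℝ | q < s * x}
      = ENNReal.ofReal (cdf (gaussianReal 0 1) ((s * zstar - q) / σstar)) := by
  have hs_sq : NNReal.mk (s ^ 2) (sq_nonneg s) = 1 := by
    ext
    rcases hs with rfl | rfl <;> norm_num
  have hset : {x : ℝ | q < s * x} = (s * ·) ⁻¹' Ioi q := rfl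
  rw [gaussianReal_bind_gaussianReal_div, hset,
    gaussianReal_preimage_const_mul _ _ _ measurableSet_Ioi, hs_sq, one_mul, gaussianReal_Ioi _ _ (by simp), hzstar, hσstar]
  congr 4
  push_cast
  ring

/-- Closed-form Bayesian predictive power of the replication study:
`η⁽²⁾ = Φ((sgn(z⁽¹⁾)·z* − z_{α₂})/σ*)`. -/
theorem bayesian_predictive_power (σ₀ σ₁ σ₂ : ℝ≥0)
    (hσ₀ : 0 < σ₀) (hσ₁ : 0 < σ₁) (hσ₂ : 0 < σ₂) (muHat q : ℝ)
    (s : ℝ) (hs : s = -1 ∨ s = 1)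
    (lam : ℝ≥0) (hlam : lam = 1 / (1 + (σ₁ / σ₀) ^ 2))
    (zstar : ℝ) (hzstar : zstar = (lam : ℝ) * muHat / σ₂)
    (σstar : ℝ) (hσstar : σstar = Real.sqrt (1 + (lam : ℝ) * ((σ₁ : ℝ) / σ₂) ^ 2)) :
    ((gaussianReal ((lam : ℝ) * muHat) (lam * σ₁ ^ 2)).bind
        (fun m => gaussianReal (m / σ₂) 1)) {x : ℝ | q < s * x}
      = ENNReal.ofReal (cdf (gaussianReal 0 1) ((s * zstar - q) / σstar)) :=
  bayesian_predictive_power_general σ₁ σ₂ muHat q s hs lam zstar hzstar σstar hσstar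
end
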